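/- Let q₁ > 0 and let H, E'(t) be as in the context, and let f = (f₁, f₂) ∈ H with f₁ and f₂ continuous on ℝ. Then e_f(t) = ⟨f, E'(t) f⟩ is differentiable at every t ∈ (-1/2, 0) ∪ (0, 1/2), with derivative e_f'(t) = (1 - 2t)/(2 |t| · |ln(2|t|)|) · ( |f₂(s_t)|² + |f₂(-s_t)|² ) for t ∈ (-1/2, 0), and e_f'(t) = (1 - 2t)/(2 t · |ln(2t)|) · ( |f₁(s_t)|² + |f₁(-s_t)|² ) for t ∈ (0, 1/2), where s_t = |ln(2|t|)|/q₁. -/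

import Mathlib

open MeasureTheory Set

noncomputable section

/-- `w₁(k) = (1 - e^{-q₁|k|})/(2|k|)`. -/
def w1 (q₁ k : ℝ) : ℝ := (1 - Real.exp (-(q₁ * |k|))) / (2 * |k|)

/-- `w₂(k) = (1 + e^{-q₁|k|})/(2|k|)`. -/
def w2 (q₁ k : ℝ) : ℝ := (1 + Real.exp (-(q₁ * |k|))) / (2 * |k|)

/-- The measure `μ₁` with density `w₁` w.r.t. Lebesgue measure. -/
def mu1 (q₁ : ℝ) : Measure ℝ := volume.withDensity fun k => ENNReal.ofReal (w1 q₁ k)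

/-- The measure `μ₂` with density `w₂` w.r.t. Lebesgue measure. -/
def mu2 (q₁ : ℝ) : Measure ℝ := volume.withDensity fun k => ENNReal.ofReal (w2 q₁ k)

/-- First multiplier of the NP operator of the touching-disks domain: `(1/2)e^{-q₁|k|}`. -/
def m1' (q₁ k : ℝ) : ℝ := (1/2) * Real.exp (-(q₁ * |k|))

/-- Second multiplier of the NP operator of the touching-disks domain: `-(1/2)e^{-q₁|k|}`. -/
def m2' (q₁ k : ℝ) : ℝ := -(1/2) * Real.exp (-(q₁ * |k|))

/-- `A₁'(t) = {k : (1/2)e^{-q₁|k|} ≤ t}`. -/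
def A1' (q₁ t : ℝ) : Set ℝ := {k | m1' q₁ k ≤ t}

/-- `A₂'(t) = {k : -(1/2)e^{-q₁|k|} ≤ t}`. -/
def A2' (q₁ t : ℝ) : Set ℝ := {k | m2' q₁ k ≤ t}

/-- `e_f(t) = ⟨f, E'(t) f⟩` for `f = (f₁, f₂) ∈ H = L²(μ₁) × L²(μ₂)`, where
`E'(t)(f₁,f₂) = (1_{A₁'(t)} f₁, 1_{A₂'(t)} f₂)`. -/
def eSpec' (q₁ : ℝ) (f₁ f₂ : ℝ → ℂ) (t : ℝ) : ℝ :=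
  (∫ k in A1' q₁ t, ‖f₁ k‖ ^ 2 ∂(mu1 q₁)) + (∫ k in A2' q₁ t, ‖f₂ k‖ ^ 2 ∂(mu2 q₁))

/-!
For `t < 0` the first component of `E'(t)` vanishes and the second is the projection onto
`{|k| ≤ s_t}`; for `t > 0` the second component is the identity and the first is the projection
onto `{|k| ≥ s_t}`. Hence, up to sign and an additive constant, `e_f(t) = ∫_{-s_t}^{s_t} |fᵢ|² wᵢ`,
and the fundamental theorem of calculus with the chain rule gives
`e_f'(t) = ∓ (|fᵢ(s_t)|² + |fᵢ(-s_t)|²) wᵢ(s_t) / (q₁ t)`. The density simplifies because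
`e^{-q₁ s_t} = 2|t|`, so that `wᵢ(±s_t) = (1 - 2t) / (2 s_t)`.
-/

open Filter Topology

section WithDensity

variable {α : Type*} [MeasurableSpace α] {μ : Measure α} {w : α → ℝ}

lemma integrable_sq_norm_mul_of_memLp_withDensity {E : Type*} [NormedAddCommGroup E]
    (hw : Measurable w) (hw0 : ∀ x, 0 ≤ w x) {f : α → E}
    (hf : MemLp f 2 (μ.withDensity fun x => ENNReal.ofReal (w x))) :
    Integrable (fun x => ‖f x‖ ^ 2 * w x) μ := by
  have h := (memLp_two_iff_integrable_sq_norm hf.1).1 hf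
  rw [integrable_withDensity_iff hw.ennreal_ofReal
    (ae_of_all _ fun _ => ENNReal.ofReal_lt_top)] at h
  simpa only [ENNReal.toReal_ofReal (hw0 _)] using h

lemma setIntegral_withDensity_ofReal (hw : Measurable w) (hw0 : ∀ x, 0 ≤ w x) (g : α → ℝ)
    {s : Set α} (hs : MeasurableSet s) :
    ∫ x in s, g x ∂(μ.withDensity fun x => ENNReal.ofReal (w x)) = ∫ x in s, g x * w x ∂μ := by
  rw [setIntegral_withDensity_eq_setIntegral_toReal_smul hw.ennreal_ofReal
    (ae_of_all _ fun _ => ENNReal.ofReal_lt_top) g hs]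
  simp only [ENNReal.toReal_ofReal (hw0 _), smul_eq_mul, mul_comm]

end WithDensity

lemma hasDerivAt_intervalIntegral_neg_self {E : Type*} [NormedAddCommGroup E] [NormedSpace ℝ E]
    [CompleteSpace E] {F : ℝ → E} (hF : LocallyIntegrable F) {s : ℝ}
    (hs : ContinuousAt F s) (hs' : ContinuousAt F (-s)) :
    HasDerivAt (fun s => ∫ x in -s..s, F x) (F s + F (-s)) s := by
  have hint (a b : ℝ) : IntervalIntegrable F volume a b :=
    (hF.integrableOn_isCompact isCompact_uIcc).intervalIntegrable
  have hright (u : ℝ) (hu : ContinuousAt F u) :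
      HasDerivAt (fun u => ∫ x in (0 : ℝ)..u, F x) (F u) u :=
    intervalIntegral.integral_hasDerivAt_right (hint 0 u)
      hF.aestronglyMeasurable.stronglyMeasurableAtFilter hu
  have hsplit : (fun s => ∫ x in -s..s, F x) =
      fun s => (∫ x in (0 : ℝ)..s, F x) - ∫ x in (0 : ℝ)..(-s), F x :=
    funext fun s => (intervalIntegral.integral_interval_sub_left (hint 0 s) (hint 0 (-s))).symm
  rw [hsplit]
  exact ((hright s hs).sub ((hright (-s) hs').scomp s (hasDerivAt_neg s))).congr_deriv (by simp)

section LevelSets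

variable {q t : ℝ}

lemma le_exp_neg_mul_abs_iff (hq : 0 < q) {u : ℝ} (hu : 0 < u) (k : ℝ) :
    u ≤ Real.exp (-(q * |k|)) ↔ |k| ≤ -Real.log u / q := by
  rw [← Real.log_le_iff_le_exp hu, le_div_iff₀ hq]
  constructor <;> intro h <;> linarith

lemma exp_neg_mul_abs_le_iff (hq : 0 < q) {u : ℝ} (hu : 0 < u) (k : ℝ) :
    Real.exp (-(q * |k|)) ≤ u ↔ -Real.log u / q ≤ |k| := by
  rw [← Real.le_log_iff_exp_le hu, div_le_iff₀ hq]
  constructor <;> intro h <;> linarith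

/-- The paper's `s_t = |ln (2|t|)| / q` without the outer absolute value, which agrees with it for
`0 < |t| < 1/2`. -/
def levelRadius (q t : ℝ) : ℝ := -Real.log (2 * |t|) / q

lemma levelRadius_pos (hq : 0 < q) (ht₀ : t ≠ 0) (ht : |t| < 1 / 2) : 0 < levelRadius q t := by
  have : Real.log (2 * |t|) < 0 := Real.log_neg (by positivity) (by linarith)
  exact div_pos (by linarith) hq

lemma abs_log_eq_mul_levelRadius (hq : q ≠ 0) (ht₀ : t ≠ 0) (ht : |t| < 1 / 2) :
    |Real.log (2 * |t|)| = q * levelRadius q t := by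
  rw [levelRadius, mul_div_cancel₀ _ hq, abs_of_neg (Real.log_neg (by positivity) (by linarith))]

lemma exp_neg_mul_levelRadius (hq : q ≠ 0) (ht₀ : t ≠ 0) :
    Real.exp (-(q * levelRadius q t)) = 2 * |t| := by
  rw [levelRadius, mul_div_cancel₀ _ hq, neg_neg, Real.exp_log (by positivity)]

lemma hasDerivAt_levelRadius (q : ℝ) (ht₀ : t ≠ 0) :
    HasDerivAt (levelRadius q) (-1 / (q * t)) t := by
  have hlog : levelRadius q = fun t => -Real.log (2 * t) / q := by
    funext t
    rw [levelRadius, ← abs_two, ← abs_mul, Real.log_abs, abs_two]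
  have h := (((hasDerivAt_id' t).const_mul 2).log (by simpa using ht₀)).neg.div_const q
  rw [hlog]
  exact h.congr_deriv (by field_simp)

lemma A1'_eq_empty (ht : t ≤ 0) : A1' q t = ∅ := by
  ext k
  simp only [A1', m1', mem_ofPred_eq, mem_empty_iff_false, iff_false, not_le]
  linarith [Real.exp_pos (-(q * |k|))]

lemma A2'_eq_univ (ht : 0 ≤ t) : A2' q t = univ := by
  ext k
  simp only [A2', m2', mem_ofPred_eq, mem_univ, iff_true]
  linarith [Real.exp_pos (-(q * |k|))]

lemma A1'_eq_compl_Ioo (hq : 0 < q) (ht : 0 < t) :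
    A1' q t = (Ioo (-levelRadius q t) (levelRadius q t))ᶜ := by
  ext k
  rw [mem_compl_iff, mem_Ioo, ← abs_lt, not_lt, levelRadius,
    ← exp_neg_mul_abs_le_iff hq (by positivity), A1', mem_ofPred_eq, m1', abs_of_pos ht]
  constructor <;> intro h <;> linarith

lemma A2'_eq_Icc (hq : 0 < q) (ht : t < 0) :
    A2' q t = Icc (-levelRadius q t) (levelRadius q t) := by
  ext k
  rw [mem_Icc, ← abs_le, levelRadius,
    ← le_exp_neg_mul_abs_iff hq (mul_pos two_pos (abs_pos.2 ht.ne)), A2', mem_ofPred_eq, m2',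
    abs_of_neg ht]
  constructor <;> intro h <;> linarith

end LevelSets

section Weights

variable {q t : ℝ}

lemma measurable_w1 (q : ℝ) : Measurable (w1 q) := by
  unfold w1; fun_prop

lemma measurable_w2 (q : ℝ) : Measurable (w2 q) := by
  unfold w2; fun_prop

lemma w1_nonneg (hq : 0 ≤ q) (k : ℝ) : 0 ≤ w1 q k := by
  have : Real.exp (-(q * |k|)) ≤ 1 := Real.exp_le_one_iff.2 (by simp only [neg_nonpos]; positivity)
  exact div_nonneg (by linarith) (by positivity)

lemma w2_nonneg (q k : ℝ) : 0 ≤ w2 q k :=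
  div_nonneg (by positivity) (by positivity)

lemma continuousAt_w1 (q : ℝ) {k : ℝ} (hk : k ≠ 0) : ContinuousAt (w1 q) k := by
  unfold w1
  exact ContinuousAt.div (by fun_prop) (by fun_prop) (by simpa using hk)

lemma continuousAt_w2 (q : ℝ) {k : ℝ} (hk : k ≠ 0) : ContinuousAt (w2 q) k := by
  unfold w2
  exact ContinuousAt.div (by fun_prop) (by fun_prop) (by simpa using hk)

lemma w1_neg (q k : ℝ) : w1 q (-k) = w1 q k := by
  rw [w1, w1, abs_neg]

lemma w2_neg (q k : ℝ) : w2 q (-k) = w2 q k := by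
  rw [w2, w2, abs_neg]

lemma w1_levelRadius (hq : 0 < q) (ht : t ∈ Ioo 0 (1 / 2)) :
    w1 q (levelRadius q t) = (1 - 2 * t) / (2 * levelRadius q t) := by
  have hs := levelRadius_pos hq ht.1.ne' (by rw [abs_of_pos ht.1]; exact ht.2)
  rw [w1, abs_of_pos hs, exp_neg_mul_levelRadius hq.ne' ht.1.ne', abs_of_pos ht.1]

lemma w2_levelRadius (hq : 0 < q) (ht : t ∈ Ioo (-(1 / 2)) 0) :
    w2 q (levelRadius q t) = (1 - 2 * t) / (2 * levelRadius q t) := by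
  have hs := levelRadius_pos hq ht.2.ne (by rw [abs_of_neg ht.2]; linarith [ht.1])
  rw [w2, abs_of_pos hs, exp_neg_mul_levelRadius hq.ne' ht.2.ne, abs_of_neg ht.2]
  ring

end Weights

section SpectralFunction

variable {q t : ℝ}

lemma eSpec'_eq_of_neg (hq : 0 < q) (ht : t ∈ Ioo (-(1 / 2)) 0) (f₁ f₂ : ℝ → ℂ) :
    eSpec' q f₁ f₂ t = ∫ k in -levelRadius q t..levelRadius q t, ‖f₂ k‖ ^ 2 * w2 q k := by
  have hs := levelRadius_pos hq ht.2.ne (by rw [abs_of_neg ht.2]; linarith [ht.1])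
  rw [eSpec', A1'_eq_empty ht.2.le, Measure.restrict_empty, integral_zero_measure, zero_add,
    A2'_eq_Icc hq ht.2, mu2, setIntegral_withDensity_ofReal (measurable_w2 q) (w2_nonneg q) _
      measurableSet_Icc, integral_Icc_eq_integral_Ioc,
    intervalIntegral.integral_of_le (by linarith)]

lemma eSpec'_eq_of_pos (hq : 0 < q) (ht : t ∈ Ioo 0 (1 / 2))
    {f₁ : ℝ → ℂ} (hf₁ : Integrable (fun k => ‖f₁ k‖ ^ 2 * w1 q k)) (f₂ : ℝ → ℂ) :
    eSpec' q f₁ f₂ t = (∫ k, ‖f₁ k‖ ^ 2 * w1 q k)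
      - (∫ k in -levelRadius q t..levelRadius q t, ‖f₁ k‖ ^ 2 * w1 q k)
      + ∫ k, ‖f₂ k‖ ^ 2 ∂mu2 q := by
  have hs := levelRadius_pos hq ht.1.ne' (by rw [abs_of_pos ht.1]; exact ht.2)
  rw [eSpec', A2'_eq_univ ht.1.le, Measure.restrict_univ, A1'_eq_compl_Ioo hq ht.1, mu1,
    setIntegral_withDensity_ofReal (measurable_w1 q) (w1_nonneg hq.le) _ measurableSet_Ioo.compl,
    setIntegral_compl measurableSet_Ioo hf₁, intervalIntegral.integral_of_le (by linarith),
    integral_Ioc_eq_integral_Ioo]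

lemma hasDerivAt_eSpec'_of_neg (hq : 0 < q) (f₁ : ℝ → ℂ) {f₂ : ℝ → ℂ}
    (hf₂ : MemLp f₂ 2 (mu2 q)) (hc₂ : Continuous f₂) (ht : t ∈ Ioo (-(1 / 2)) 0) :
    HasDerivAt (eSpec' q f₁ f₂)
      ((1 - 2 * t) / (2 * |t| * |Real.log (2 * |t|)|) *
        (‖f₂ (|Real.log (2 * |t|)| / q)‖ ^ 2 + ‖f₂ (-(|Real.log (2 * |t|)| / q))‖ ^ 2)) t := by
  have ht' : |t| < 1 / 2 := by rw [abs_of_neg ht.2]; linarith [ht.1]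
  set s := levelRadius q t
  have hs : 0 < s := levelRadius_pos hq ht.2.ne ht'
  have hint : LocallyIntegrable (fun k => ‖f₂ k‖ ^ 2 * w2 q k) :=
    (integrable_sq_norm_mul_of_memLp_withDensity (measurable_w2 q) (w2_nonneg q)
      hf₂).locallyIntegrable
  have hcont {k : ℝ} (hk : k ≠ 0) : ContinuousAt (fun k => ‖f₂ k‖ ^ 2 * w2 q k) k :=
    (hc₂.norm.pow 2).continuousAt.mul (continuousAt_w2 q hk)
  have hderiv := (hasDerivAt_intervalIntegral_neg_self hint (hcont hs.ne')
    (hcont (neg_ne_zero.2 hs.ne'))).comp t (hasDerivAt_levelRadius q ht.2.ne)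
  have heq : eSpec' q f₁ f₂ =ᶠ[𝓝 t] _ :=
    eventually_of_mem (Ioo_mem_nhds ht.1 ht.2) fun _ hu => eSpec'_eq_of_neg hq hu f₁ f₂
  refine (hderiv.congr_of_eventuallyEq heq).congr_deriv ?_
  rw [abs_log_eq_mul_levelRadius hq.ne' ht.2.ne ht', mul_div_cancel_left₀ _ hq.ne', w2_neg,
    w2_levelRadius hq ht, abs_of_neg ht.2]
  field_simp
  ring

lemma hasDerivAt_eSpec'_of_pos (hq : 0 < q) {f₁ : ℝ → ℂ} (f₂ : ℝ → ℂ)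
    (hf₁ : MemLp f₁ 2 (mu1 q)) (hc₁ : Continuous f₁) (ht : t ∈ Ioo 0 (1 / 2)) :
    HasDerivAt (eSpec' q f₁ f₂)
      ((1 - 2 * t) / (2 * t * |Real.log (2 * t)|) *
        (‖f₁ (|Real.log (2 * t)| / q)‖ ^ 2 + ‖f₁ (-(|Real.log (2 * t)| / q))‖ ^ 2)) t := by
  have ht' : |t| < 1 / 2 := by rw [abs_of_pos ht.1]; exact ht.2
  set s := levelRadius q t
  have hs : 0 < s := levelRadius_pos hq ht.1.ne' ht'
  have hint : Integrable (fun k => ‖f₁ k‖ ^ 2 * w1 q k) :=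
    integrable_sq_norm_mul_of_memLp_withDensity (measurable_w1 q) (w1_nonneg hq.le) hf₁
  have hcont {k : ℝ} (hk : k ≠ 0) : ContinuousAt (fun k => ‖f₁ k‖ ^ 2 * w1 q k) k :=
    (hc₁.norm.pow 2).continuousAt.mul (continuousAt_w1 q hk)
  have hderiv := (((hasDerivAt_intervalIntegral_neg_self hint.locallyIntegrable (hcont hs.ne')
    (hcont (neg_ne_zero.2 hs.ne'))).comp t (hasDerivAt_levelRadius q ht.1.ne')).const_sub
      (∫ k, ‖f₁ k‖ ^ 2 * w1 q k)).add_const (∫ k, ‖f₂ k‖ ^ 2 ∂mu2 q)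
  have heq : eSpec' q f₁ f₂ =ᶠ[𝓝 t] _ :=
    eventually_of_mem (Ioo_mem_nhds ht.1 ht.2) fun _ hu => eSpec'_eq_of_pos hq hu hint f₂
  refine (hderiv.congr_of_eventuallyEq heq).congr_deriv ?_
  have hlog : Real.log (2 * t) = Real.log (2 * |t|) := by rw [abs_of_pos ht.1]
  rw [hlog, abs_log_eq_mul_levelRadius hq.ne' ht.1.ne' ht',
    mul_div_cancel_left₀ _ hq.ne', w1_neg, w1_levelRadius hq ht]
  field_simp
  ring

end SpectralFunction

/-- For `f = (f₁,f₂) ∈ H` with `f₁, f₂` continuous,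
`e_f(t) = ⟨f, E'(t) f⟩` is differentiable on `(-1/2,0) ∪ (0,1/2)`, with the explicit
derivative given by the spectral density of the touching-disks domain, where
`s_t = |ln(2|t|)|/q₁`. -/
theorem neumannPoincare_touchingDisks_spectral_density
    (q₁ : ℝ) (hq₁ : 0 < q₁) (f₁ f₂ : ℝ → ℂ)
    (hf₁ : MemLp f₁ 2 (mu1 q₁)) (hf₂ : MemLp f₂ 2 (mu2 q₁))
    (hc₁ : Continuous f₁) (hc₂ : Continuous f₂) :
    (∀ t ∈ Ioo (-(1/2) : ℝ) 0,
      HasDerivAt (eSpec' q₁ f₁ f₂)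
        ((1 - 2*t) / (2 * |t| * |Real.log (2*|t|)|) *
          (‖f₂ (|Real.log (2*|t|)| / q₁)‖ ^ 2 + ‖f₂ (-(|Real.log (2*|t|)| / q₁))‖ ^ 2)) t) ∧
    (∀ t ∈ Ioo (0 : ℝ) (1/2),
      HasDerivAt (eSpec' q₁ f₁ f₂)
        ((1 - 2*t) / (2 * t * |Real.log (2*t)|) *
          (‖f₁ (|Real.log (2*|t|)| / q₁)‖ ^ 2 + ‖f₁ (-(|Real.log (2*|t|)| / q₁))‖ ^ 2)) t) :=
  ⟨fun _ ht => hasDerivAt_eSpec'_of_neg hq₁ f₁ hf₂ hc₂ ht,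
    fun _ ht => by simpa only [abs_of_pos ht.1] using hasDerivAt_eSpec'_of_pos hq₁ f₂ hf₁ hc₁ ht⟩
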